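/- Let U ∈ ℝ^{d×K} have orthonormal columns and let W ∈ ℝ^{d×K} be arbitrary. Then ‖WUᵀ + UWᵀ‖_F ≤ √2·‖(I − UUᵀ)W‖_F + 2‖UUᵀW‖_F. -/

import Mathlib

open Matrix BigOperators

/-- Squared Frobenius norm of a real matrix. -/
noncomputable def frobSq {m n : Type*} [Fintype m] [Fintype n] (A : Matrix m n ℝ) : ℝ :=
  ∑ i, ∑ j, (A i j) ^ 2

/-- Frobenius norm of a real matrix. -/
noncomputable def frob {m n : Type*} [Fintype m] [Fintype n] (A : Matrix m n ℝ) : ℝ :=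
  Real.sqrt (frobSq A)

/-!
Split `W = B + C` with `B = (I - UUᵀ)W` and `C = UUᵀW`. Since `UᵀB = 0`, the two terms of
`BUᵀ + UBᵀ` are Frobenius-orthogonal, and multiplication by `U` or `Uᵀ` preserves the
Frobenius norm, so `‖BUᵀ + UBᵀ‖_F = √2 ‖B‖_F`. The triangle inequality bounds the
remaining part by `‖CUᵀ‖_F + ‖UCᵀ‖_F = 2 ‖C‖_F`.
-/

section Frobenius

attribute [local instance] Matrix.frobeniusNormedAddCommGroup

variable {l m n : Type*} [Fintype l] [Fintype m] [Fintype n]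

lemma frobSq_eq_trace_transpose_mul (A : Matrix m n ℝ) : frobSq A = trace (Aᵀ * A) := by
  simp only [frobSq, trace, diag, mul_apply, transpose_apply, sq]
  exact Finset.sum_comm

lemma frobSq_transpose (A : Matrix m n ℝ) : frobSq Aᵀ = frobSq A := by
  rw [frobSq_eq_trace_transpose_mul, frobSq_eq_trace_transpose_mul, transpose_transpose,
    trace_mul_comm]

lemma frob_eq_frobenius_norm (A : Matrix m n ℝ) : frob A = ‖A‖ := by
  simp only [frob, frobSq, frobenius_norm_def, Real.norm_eq_abs, Real.rpow_two, sq_abs,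
    Real.sqrt_eq_rpow]

lemma frob_add_le (A B : Matrix m n ℝ) : frob (A + B) ≤ frob A + frob B := by
  simpa only [frob_eq_frobenius_norm] using norm_add_le A B

lemma frobSq_add_of_transpose_mul_eq_zero {A B : Matrix m n ℝ} (h : Aᵀ * B = 0) :
    frobSq (A + B) = frobSq A + frobSq B := by
  have h' : trace (Bᵀ * A) = 0 := by
    rw [← trace_transpose, transpose_mul, transpose_transpose, h, trace_zero]
  simp only [frobSq_eq_trace_transpose_mul, transpose_add, Matrix.add_mul, Matrix.mul_add,
    trace_add, h, h', trace_zero]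
  ring

variable [DecidableEq n] {U : Matrix m n ℝ}

lemma frobSq_mul_of_transpose_mul_self_eq_one (hU : Uᵀ * U = 1) (A : Matrix n l ℝ) :
    frobSq (U * A) = frobSq A := by
  rw [frobSq_eq_trace_transpose_mul, frobSq_eq_trace_transpose_mul, transpose_mul,
    Matrix.mul_assoc, ← Matrix.mul_assoc Uᵀ, hU, Matrix.one_mul]

lemma frobSq_mul_transpose_of_transpose_mul_self_eq_one (hU : Uᵀ * U = 1) (A : Matrix l n ℝ) :
    frobSq (A * Uᵀ) = frobSq A := by
  rw [← frobSq_transpose, transpose_mul, transpose_transpose,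
    frobSq_mul_of_transpose_mul_self_eq_one hU, frobSq_transpose]

lemma frob_mul_transpose_add_le (hU : Uᵀ * U = 1) (C : Matrix m n ℝ) :
    frob (C * Uᵀ + U * Cᵀ) ≤ 2 * frob C := by
  have hCUt : frob (C * Uᵀ) = frob C := by
    rw [frob, frobSq_mul_transpose_of_transpose_mul_self_eq_one hU, frob]
  have hUCt : frob (U * Cᵀ) = frob C := by
    rw [frob, frobSq_mul_of_transpose_mul_self_eq_one hU, frobSq_transpose, frob]
  linarith [frob_add_le (C * Uᵀ) (U * Cᵀ)]

lemma frob_mul_transpose_add_of_transpose_mul_eq_zero (hU : Uᵀ * U = 1) {B : Matrix m n ℝ}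
    (hB : Uᵀ * B = 0) : frob (B * Uᵀ + U * Bᵀ) = Real.sqrt 2 * frob B := by
  have hBtU : Bᵀ * U = 0 := by
    rw [← transpose_transpose (Bᵀ * U), transpose_mul, transpose_transpose, hB, transpose_zero]
  have horth : (B * Uᵀ)ᵀ * (U * Bᵀ) = 0 := by
    rw [transpose_mul, transpose_transpose, Matrix.mul_assoc, ← Matrix.mul_assoc Bᵀ, hBtU,
      Matrix.zero_mul, Matrix.mul_zero]
  rw [frob, frob, frobSq_add_of_transpose_mul_eq_zero horth,
    frobSq_mul_transpose_of_transpose_mul_self_eq_one hU,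
    frobSq_mul_of_transpose_mul_self_eq_one hU, frobSq_transpose, ← two_mul,
    Real.sqrt_mul zero_le_two]

end Frobenius

/-- Let `U ∈ ℝ^{d×K}` have orthonormal columns and `W ∈ ℝ^{d×K}` be arbitrary. Then
`‖WUᵀ + UWᵀ‖_F ≤ √2 ‖(I − UUᵀ)W‖_F + 2 ‖UUᵀW‖_F`. -/
theorem frob_WUt_add_UWt_le {d K : ℕ} (U W : Matrix (Fin d) (Fin K) ℝ)
    (hU : Uᵀ * U = 1) :
    frob (W * Uᵀ + U * Wᵀ) ≤
      Real.sqrt 2 * frob (((1 : Matrix (Fin d) (Fin d) ℝ) - U * Uᵀ) * W) +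
      2 * frob (U * Uᵀ * W) := by
  set B := ((1 : Matrix (Fin d) (Fin d) ℝ) - U * Uᵀ) * W with hB
  set C := U * Uᵀ * W with hC
  have hW : W = B + C := by rw [hB, hC, Matrix.sub_mul, Matrix.one_mul, sub_add_cancel]
  have hUB : Uᵀ * B = 0 := by
    rw [hB, ← Matrix.mul_assoc, Matrix.mul_sub, Matrix.mul_one, ← Matrix.mul_assoc, hU,
      Matrix.one_mul, sub_self, Matrix.zero_mul]
  calc frob (W * Uᵀ + U * Wᵀ) = frob ((B * Uᵀ + U * Bᵀ) + (C * Uᵀ + U * Cᵀ)) := by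
        rw [hW, Matrix.add_mul, transpose_add, Matrix.mul_add]; abel_nf
    _ ≤ frob (B * Uᵀ + U * Bᵀ) + frob (C * Uᵀ + U * Cᵀ) := frob_add_le _ _
    _ ≤ Real.sqrt 2 * frob B + 2 * frob C :=
        add_le_add (frob_mul_transpose_add_of_transpose_mul_eq_zero hU hUB).le
          (frob_mul_transpose_add_le hU C)
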